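/- arXiv:1307.0939 — 3 statements merged into one kernel-verified Lean document; each statement's English description precedes it below -/
import Mathlib

section
/- Let E be an invertible N×N rational matrix with integer entries. For subgroups of (ℚ/ℤ)^N, define the dual of a subgroup G (viewed as row vectors k with k·E^{-1}·l ∈ ℤ for all l ∈ G^∨) by G^∨ = { l ∈ ℤ^N mod im(E^T) : k E^{-1} l ∈ ℤ for all k representing elements of G }. Then duality is an involution: (G^∨)^∨ = G. -/
open Matrix

/-- The Berglund–Hübsch–Krawitz pairing `(k, l) ↦ k · E⁻¹ · l` (valued in `ℚ`,
considered mod `ℤ`). -/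
def bhkPair {N : ℕ} (A : Matrix (Fin N) (Fin N) ℚ) (k l : Fin N → ℤ) : ℚ :=
  (fun i => (k i : ℚ)) ⬝ᵥ A.mulVec (fun j => (l j : ℚ))

/-- The dual `G^∨ = { l : k E⁻¹ l ∈ ℤ for all k ∈ G }` of a subgroup `G ⊆ Aut(W)`,
where elements of `Aut(W)` are represented by integer vectors `k` (mod the lattice
`Eᵀ ℤ^N`) and elements of `Aut(W^∨)` by integer vectors `l` (mod `E ℤ^N`). -/
def bhkDualRight {N : ℕ} (A : Matrix (Fin N) (Fin N) ℚ) (S : Set (Fin N → ℤ)) :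
    Set (Fin N → ℤ) :=
  { l | ∀ k ∈ S, ∃ z : ℤ, bhkPair A k l = z }

/-- The dual in the opposite direction (subgroups of `Aut(W^∨)` to subgroups of
`Aut(W)`), using the same pairing. -/
def bhkDualLeft {N : ℕ} (A : Matrix (Fin N) (Fin N) ℚ) (S : Set (Fin N → ℤ)) :
    Set (Fin N → ℤ) :=
  { k | ∀ l ∈ S, ∃ z : ℤ, bhkPair A k l = z }

/-- The canonical projection `ℚ → ℚ/ℤ` as an additive group hom. -/
noncomputable def bhkCm : ℚ →+ AddCircle (1 : ℚ) :=
  QuotientAddGroup.mk' _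

lemma bhkCm_apply (q : ℚ) : bhkCm q = (q : AddCircle (1 : ℚ)) := rfl

lemma bhkCm_int (z : ℤ) : bhkCm (z : ℚ) = 0 := by
  rw [bhkCm_apply, AddCircle.coe_eq_zero_iff]
  exact ⟨z, by simp⟩

lemma bhkCm_eq_zero_iff (q : ℚ) : bhkCm q = 0 ↔ ∃ z : ℤ, (z : ℚ) = q := by
  rw [bhkCm_apply, AddCircle.coe_eq_zero_iff]
  simp [zsmul_eq_mul]

/-- Berglund–Hübsch–Krawitz duality is an involution: `(G^∨)^∨ = G` for any
subgroup `G` of `Aut(W) ≅ ℤ^N/(Eᵀ ℤ^N)`, i.e. any subgroup of `ℤ^N` containing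
the lattice `Eᵀ ℤ^N`. -/
theorem bhk_duality_involution (N : ℕ) (E : Matrix (Fin N) (Fin N) ℤ)
    (hE : IsUnit ((E.map (Int.cast : ℤ → ℚ)).det))
    (G : AddSubgroup (Fin N → ℤ))
    (hlat : ∀ m : Fin N → ℤ, (Eᵀ).mulVec m ∈ G) :
    bhkDualLeft (E.map (Int.cast : ℤ → ℚ))⁻¹
        (bhkDualRight (E.map (Int.cast : ℤ → ℚ))⁻¹ (G : Set (Fin N → ℤ)))
      = (G : Set (Fin N → ℤ)) := by
  set Eq : Matrix (Fin N) (Fin N) ℚ := E.map (Int.cast : ℤ → ℚ) with hEqdef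
  apply Set.Subset.antisymm
  · intro k₀ hk₀
    by_contra hk₀G
    -- a character of `ℤ^N/G` not vanishing at `k₀`
    have hne : (QuotientAddGroup.mk' G k₀) ≠ 0 := by
      simpa [QuotientAddGroup.mk'_apply, QuotientAddGroup.eq_zero_iff] using hk₀G
    obtain ⟨c, hc⟩ := CharacterModule.exists_character_apply_ne_zero_of_ne_zero hne
    set χ : (Fin N → ℤ) →+ AddCircle (1 : ℚ) := c.comp (QuotientAddGroup.mk' G) with hχdef
    have hχG : ∀ k ∈ G, χ k = 0 := by
      intro k hk
      show c ((QuotientAddGroup.mk' G) k) = 0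
      rw [QuotientAddGroup.mk'_apply, (QuotientAddGroup.eq_zero_iff k).2 hk, map_zero]
    -- lift values on basis vectors to rationals
    have hv : ∀ i : Fin N, ∃ q : ℚ, bhkCm q = χ (Pi.single i 1) := fun i =>
      Quotient.exists_rep (χ (Pi.single i 1))
    choose v hv using hv
    -- `χ k = (k ⬝ᵥ v) mod ℤ`
    have key : ∀ k : Fin N → ℤ, χ k = bhkCm ((fun i => (k i : ℚ)) ⬝ᵥ v) := by
      intro k
      have hk : k = ∑ i, k i • Pi.single i (1 : ℤ) := by
        conv_lhs => rw [← Finset.univ_sum_single k]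
        refine Finset.sum_congr rfl fun i _ => ?_
        rw [← Pi.single_smul, smul_eq_mul, mul_one]
      calc χ k = ∑ i, k i • χ (Pi.single i 1) := by
            conv_lhs => rw [hk]
            rw [map_sum]
            exact Finset.sum_congr rfl fun i _ => map_zsmul χ _ _
        _ = ∑ i, bhkCm ((k i : ℚ) * v i) := by
            refine Finset.sum_congr rfl fun i _ => ?_
            rw [← hv i, ← map_zsmul, zsmul_eq_mul]
        _ = bhkCm ((fun i => (k i : ℚ)) ⬝ᵥ v) := by
            rw [← map_sum]; rfl
    -- casting the lattice condition: `E v` is integral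
    have castlat : ∀ m : Fin N → ℤ,
        (fun i => (((Eᵀ).mulVec m) i : ℚ)) = (Eq)ᵀ.mulVec (fun i => (m i : ℚ)) := by
      intro m
      funext i
      simp [Matrix.mulVec, dotProduct, hEqdef, Matrix.map_apply]
    have hEv : ∀ j : Fin N, ∃ z : ℤ, (z : ℚ) = Eq.mulVec v j := by
      intro j
      have h1 : χ ((Eᵀ).mulVec (Pi.single j 1)) = 0 := hχG _ (hlat _)
      rw [key] at h1
      rw [castlat] at h1
      have hsingle : (fun i => (((Pi.single j 1 : Fin N → ℤ)) i : ℚ)) =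
          Pi.single j (1 : ℚ) := by
        funext i
        by_cases h : i = j <;> simp [Pi.single_apply, h]
      rw [hsingle, Matrix.mulVec_transpose, ← Matrix.dotProduct_mulVec,
        single_dotProduct, one_mul] at h1
      exact (bhkCm_eq_zero_iff _).1 h1
    choose l hl using hEv
    have hlv : (fun j => (l j : ℚ)) = Eq.mulVec v := funext hl
    -- `E⁻¹ l = v`
    have hinv : Eq⁻¹.mulVec (fun j => (l j : ℚ)) = v := by
      rw [hlv, Matrix.mulVec_mulVec, Matrix.nonsing_inv_mul Eq hE, Matrix.one_mulVec]
    have hpair : ∀ k : Fin N → ℤ, bhkPair Eq⁻¹ k l = (fun i => (k i : ℚ)) ⬝ᵥ v := by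
      intro k
      rw [bhkPair, hinv]
    -- `l` lies in the dual of `G`
    have hldual : l ∈ bhkDualRight Eq⁻¹ (G : Set (Fin N → ℤ)) := by
      intro k hk
      obtain ⟨z, hz⟩ := (bhkCm_eq_zero_iff _).1 ((key k).symm.trans (hχG k hk))
      exact ⟨z, by rw [hpair, ← hz]⟩
    obtain ⟨z, hz⟩ := hk₀ l hldual
    rw [hpair] at hz
    apply hc
    have h0 : χ k₀ = 0 := by rw [key, hz, bhkCm_int]
    exact h0
  · intro k hk l hl
    exact hl k hk
end

section
/- With the Berglund–Hübsch–Krawitz duality, the dual of the cyclic group ⟨j_W⟩ generated by j_W (corresponding to the vector (1,1,...,1) in ℤ^N/(E_W ℤ^N)) is SL_{W^∨}, the subgroup of Aut(W^∨) consisting of elements of determinant 1 (i.e. those l with Σ_i (E_W^{-T} l)_i ∈ ℤ). -/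
open Matrix

/-- The BHK dual of the cyclic group `⟨j_W⟩` — generated by the vector `(1,…,1)`
in `ℤ^N/(Eᵀ ℤ^N)` — is `SL_{W^∨}`: the set of `l` for which the sum of the
entries of `E⁻¹ l` (the sum of the phases of the corresponding diagonal symmetry
of `W^∨`, hence its determinant exponent) is an integer. -/
theorem bhk_dual_of_jW (N : ℕ) (E : Matrix (Fin N) (Fin N) ℤ)
    (hE : IsUnit ((E.map (Int.cast : ℤ → ℚ)).det)) :
    bhkDualRight (E.map (Int.cast : ℤ → ℚ))⁻¹
        { k | ∃ c : ℤ, ∃ m : Fin N → ℤ, k = (fun _ => c) + (Eᵀ).mulVec m }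
      = { l : Fin N → ℤ | ∃ z : ℤ,
            ∑ i, ((E.map (Int.cast : ℤ → ℚ))⁻¹.mulVec (fun j => (l j : ℚ))) i
              = z } := by
  set A := E.map (Int.cast : ℤ → ℚ) with hA
  ext l
  constructor
  · intro h
    obtain ⟨z, hz⟩ := h (fun _ => (1 : ℤ)) ⟨1, 0, by funext i; simp⟩
    refine ⟨z, ?_⟩
    rw [← hz]
    simp [bhkPair, dotProduct]
  · rintro ⟨z, hz⟩ k ⟨c, m, rfl⟩
    refine ⟨c * z + m ⬝ᵥ l, ?_⟩
    have hcast : (fun i => (((((fun _ => c) + Eᵀ.mulVec m) : Fin N → ℤ) i : ℤ) : ℚ))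
        = (fun _ => (c : ℚ)) + Aᵀ.mulVec (fun j => (m j : ℚ)) := by
      funext i
      simp [hA, Matrix.mulVec, dotProduct, Matrix.transpose_apply, Matrix.map_apply,
        Pi.add_apply]
    unfold bhkPair
    rw [hcast, add_dotProduct]
    have h1 : (fun _ => (c : ℚ)) ⬝ᵥ A⁻¹.mulVec (fun j => (l j : ℚ))
        = c * z := by
      rw [← hz]
      simp [dotProduct, Finset.mul_sum]
    have h2 : Aᵀ.mulVec (fun j => (m j : ℚ)) ⬝ᵥ A⁻¹.mulVec (fun j => (l j : ℚ))
        = ((m ⬝ᵥ l : ℤ) : ℚ) := by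
      rw [Matrix.mulVec_transpose, Matrix.dotProduct_mulVec, Matrix.vecMul_vecMul,
        Matrix.mul_nonsing_inv _ hE, Matrix.vecMul_one]
      simp [dotProduct]
    rw [h1, h2]
    push_cast
    ring
end

section
/- For the loop polynomial W = x_1^{a_1}x_2 + x_2^{a_2}x_3 + ... + x_{N-1}^{a_{N-1}}x_N + x_N^{a_N}x_1 with all a_i ≥ 2, the exponent matrix E_W (with 1's on the cyclic superdiagonal and a_i on the diagonal) has determinant ∏_{i=1}^N a_i + (-1)^{N+1}, which is nonzero; hence loop polynomials are invertible. -/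
/-!
Expand the determinant along the first column, whose only nonzero entries are `a 0` (row `0`)
and the wrap-around `1` (last row). Deleting row `0` leaves an upper triangular minor with
diagonal `a 1, …, a (N-1)`; deleting the last row leaves a lower triangular minor with the
superdiagonal `1`s on its diagonal. The sign `(-1)^(N-1)` of the second term gives the formula,
and the determinant cannot vanish because `∏ a i ≥ 2`.
-/

open Matrix

def loopMatrix {R : Type*} [Zero R] [One R] {N : ℕ} (a : Fin N → R) :
    Matrix (Fin N) (Fin N) R :=
  Matrix.of fun i j => if j = i then a i else if (j : ℕ) = ((i : ℕ) + 1) % N then 1 else 0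

section Entries

variable {R : Type*} [Zero R] [One R]

lemma loopMatrix_apply_of_lt {N : ℕ} (a : Fin N → R) {i : Fin N} (hi : (i : ℕ) + 1 < N)
    (j : Fin N) :
    loopMatrix a i j = if j = i then a i else if (j : ℕ) = i + 1 then 1 else 0 := by
  simp [loopMatrix, Nat.mod_eq_of_lt hi]

lemma loopMatrix_last_zero {n : ℕ} (a : Fin (n + 2) → R) :
    loopMatrix a (Fin.last (n + 1)) 0 = 1 := by
  simp [loopMatrix, Fin.ext_iff]

lemma loopMatrix_apply_zero_of_ne {n : ℕ} (a : Fin (n + 2) → R) {i : Fin (n + 2)}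
    (h0 : i ≠ 0) (hlast : i ≠ Fin.last (n + 1)) : loopMatrix a i 0 = 0 := by
  have hi : (i : ℕ) + 1 < n + 2 := by
    have := Fin.val_lt_last hlast
    omega
  simp [loopMatrix_apply_of_lt a hi, h0.symm]

lemma loopMatrix_succ_succ {n : ℕ} (a : Fin (n + 2) → R) (j k : Fin (n + 1)) :
    loopMatrix a j.succ k.succ = if k = j then a j.succ else if (k : ℕ) = j + 1 then 1 else 0 := by
  rcases lt_or_eq_of_le (Nat.lt_succ_iff.1 j.isLt) with hj | hj
  · rw [loopMatrix_apply_of_lt a (by rw [Fin.val_succ]; omega)]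
    simp [Fin.ext_iff]
  · have hwrap : ((j : ℕ) + 1 + 1) % (n + 2) = 0 := by simp [hj]
    have hk : (k : ℕ) ≠ j + 1 := by omega
    simp only [loopMatrix, of_apply, Fin.ext_iff, Fin.val_succ, hwrap, add_left_inj,
      Nat.add_one_ne_zero, if_false, hk]

end Entries

section Determinant

variable {R : Type*} [CommRing R]

lemma det_loopMatrix_submatrix_succAbove_zero {n : ℕ} (a : Fin (n + 2) → R) :
    ((loopMatrix a).submatrix (Fin.succAbove 0) Fin.succ).det = ∏ j : Fin (n + 1), a j.succ := by
  rw [det_of_isUpperTriangular]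
  · simp [loopMatrix]
  · intro j k (hkj : k < j)
    have hkj : (k : ℕ) < j := hkj
    simp only [submatrix_apply, Fin.succAbove_zero, loopMatrix_succ_succ]
    rw [if_neg (by omega), if_neg (by omega)]

lemma det_loopMatrix_submatrix_succAbove_last {n : ℕ} (a : Fin (n + 2) → R) :
    ((loopMatrix a).submatrix (Fin.succAbove (Fin.last (n + 1))) Fin.succ).det = 1 := by
  rw [det_of_isLowerTriangular]
  · refine Finset.prod_eq_one fun j _ => ?_
    simp only [submatrix_apply, Fin.succAbove_last]
    rw [loopMatrix_apply_of_lt a (by rw [Fin.val_castSucc]; omega)]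
    simp [Fin.ext_iff]
  · intro j k (hjk : j < k)
    have hjk : (j : ℕ) < k := hjk
    simp only [submatrix_apply, Fin.succAbove_last]
    rw [loopMatrix_apply_of_lt a (by rw [Fin.val_castSucc]; omega)]
    simp only [Fin.ext_iff, Fin.val_succ, Fin.val_castSucc]
    rw [if_neg (by omega), if_neg (by omega)]

theorem det_loopMatrix {N : ℕ} (hN : 2 ≤ N) (a : Fin N → R) :
    (loopMatrix a).det = ∏ i, a i + (-1) ^ (N + 1) := by
  obtain ⟨n, rfl⟩ : ∃ n, N = n + 2 := ⟨N - 2, by omega⟩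
  rw [det_succ_column_zero, Finset.sum_eq_add_of_mem 0 (Fin.last (n + 1)) (Finset.mem_univ _)
    (Finset.mem_univ _) (Fin.ext_iff.not.2 (by simp))
    (fun i _ hi => by rw [loopMatrix_apply_zero_of_ne a hi.1 hi.2, mul_zero, zero_mul]),
    det_loopMatrix_submatrix_succAbove_zero, det_loopMatrix_submatrix_succAbove_last,
    loopMatrix_last_zero, Fin.prod_univ_succ a]
  simp [loopMatrix, pow_succ]

end Determinant

lemma prod_add_neg_one_pow_ne_zero {ι : Type*} [Fintype ι] [Nonempty ι] (a : ι → ℤ)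
    (ha : ∀ i, 2 ≤ a i) (k : ℕ) : ∏ i, a i + (-1) ^ k ≠ 0 := by
  have h2 : 2 ≤ ∏ i, a i :=
    calc (2 : ℤ) ≤ 2 ^ Fintype.card ι := le_self_pow₀ (by norm_num) Fintype.card_ne_zero
      _ = ∏ _i : ι, 2 := by simp
      _ ≤ ∏ i, a i := Finset.prod_le_prod (fun _ _ => zero_le_two) fun i _ => ha i
  rcases neg_one_pow_eq_or ℤ k with h | h <;> omega

/-- The exponent matrix of the loop polynomial
`W = x₁^{a₁}x₂ + … + x_{N-1}^{a_{N-1}}x_N + x_N^{a_N}x₁`: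
`a i` on the diagonal and `1` on the cyclic superdiagonal. Its determinant is
`∏ a_i + (-1)^{N+1}`, which is nonzero when all `a_i ≥ 2`; hence loop
polynomials are invertible. -/
theorem loop_det (N : ℕ) (hN : 2 ≤ N) (a : Fin N → ℤ) (ha : ∀ i, 2 ≤ a i) :
    (Matrix.of (fun i j : Fin N =>
        if j = i then a i else if (j : ℕ) = ((i : ℕ) + 1) % N then 1 else 0)).det
        = (∏ i, a i) + (-1) ^ (N + 1) ∧
    (Matrix.of (fun i j : Fin N =>
        if j = i then a i else if (j : ℕ) = ((i : ℕ) + 1) % N then 1 else 0)).det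
      ≠ 0 := by
  have hdet : (loopMatrix a).det = ∏ i, a i + (-1) ^ (N + 1) := det_loopMatrix hN a
  have : Nonempty (Fin N) := ⟨⟨0, by omega⟩⟩
  exact ⟨hdet, hdet ▸ prod_add_neg_one_pow_ne_zero a ha _⟩
end
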